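/- arXiv:2102.04580 — 2 statements merged into one kernel-verified Lean document; each statement's English description precedes it below -/
import Mathlib

section
/- Let (A,B) be an m×n bimatrix game such that P and Q are bounded, let d = m+n, and let C be the d×d block matrix C = [[0, A], [Bᵀ, 0]]. Then (A,B) is nondegenerate if and only if the d×d bimatrix game (C, Cᵀ) is nondegenerate. -/
open Matrix
open scoped Classical

noncomputable section

def IsMixed {ι : Type*} [Fintype ι] (x : ι → ℝ) : Prop :=
  (∀ i, 0 ≤ x i) ∧ ∑ i, x i = 1

def supp {ι : Type*} [Fintype ι] (x : ι → ℝ) : Finset ι :=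
  Finset.univ.filter fun i => 0 < x i

def bestresp1 {ι κ : Type*} [Fintype ι] [Fintype κ] (A : Matrix ι κ ℝ) (y : κ → ℝ) :
    Finset ι :=
  Finset.univ.filter fun i => ∀ k, (A *ᵥ y) k ≤ (A *ᵥ y) i

def bestresp2 {ι κ : Type*} [Fintype ι] [Fintype κ] (B : Matrix ι κ ℝ) (x : ι → ℝ) :
    Finset κ :=
  Finset.univ.filter fun j => ∀ k, (Bᵀ *ᵥ x) k ≤ (Bᵀ *ᵥ x) j

def Nondegenerate {ι κ : Type*} [Fintype ι] [Fintype κ] (A B : Matrix ι κ ℝ) : Prop :=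
  (∀ x : ι → ℝ, IsMixed x → (bestresp2 B x).card ≤ (supp x).card) ∧
  (∀ y : κ → ℝ, IsMixed y → (bestresp1 A y).card ≤ (supp y).card)

/-- The polytope `P = {x ∈ ℝ^m : x ≥ 0, Bᵀx ≤ 𝟙}`. -/
def Pset {m n : ℕ} (B : Matrix (Fin m) (Fin n) ℝ) : Set (Fin m → ℝ) :=
  {x | (∀ i, 0 ≤ x i) ∧ ∀ j, (Bᵀ *ᵥ x) j ≤ 1}

/-- The polytope `Q = {y ∈ ℝ^n : Ay ≤ 𝟙, y ≥ 0}`. -/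
def Qset {m n : ℕ} (A : Matrix (Fin m) (Fin n) ℝ) : Set (Fin n → ℝ) :=
  {y | (∀ i, (A *ᵥ y) i ≤ 1) ∧ ∀ j, 0 ≤ y j}

/-! Boundedness of `Q` means that `A y` has a positive entry for every nonzero `y ≥ 0`, since
otherwise the whole ray through `y` lies in `Q`; likewise for `Bᵀ x` and `P`. For
`z = (x, y)` we have `C z = (A y, Bᵀ x)`. So the best responses to `z` in the symmetrized game
are best responses to `y` in `A` together with best responses to `x` in `Bᵀ`, and the first block
is empty when `y = 0` because the positive entry of `Bᵀ x` beats it (and symmetrically). Summing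
gives at most `|supp y| + |supp x| = |supp z|` best responses. Conversely, `x ↦ (x, 0)` and
`y ↦ (0, y)` embed the best responses of `(A, B)` into those of `(C, Cᵀ)` without changing
supports. -/

section

open Finset

variable {ι κ : Type*} [Fintype ι] [Fintype κ]

def maximizers (v : ι → ℝ) : Finset ι :=
  univ.filter fun i => ∀ k, v k ≤ v i

@[simp]
theorem mem_maximizers {v : ι → ℝ} {i : ι} : i ∈ maximizers v ↔ ∀ k, v k ≤ v i := by
  simp [maximizers]

theorem maximizers_smul {c : ℝ} (hc : 0 < c) (v : ι → ℝ) :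
    maximizers (c • v) = maximizers v := by
  ext i
  simp only [mem_maximizers, Pi.smul_apply, smul_eq_mul, mul_le_mul_iff_right₀ hc]

theorem toLeft_maximizers_sumElim_subset (u : ι → ℝ) (v : κ → ℝ) :
    (maximizers (Sum.elim u v)).toLeft ⊆ maximizers u := fun i hi => by
  simp only [mem_toLeft, mem_maximizers] at hi ⊢
  exact fun k => hi (.inl k)

theorem toLeft_maximizers_sumElim_eq_empty {u : ι → ℝ} {v : κ → ℝ}
    (h : ∃ j, ∀ i, u i < v j) :
    (maximizers (Sum.elim u v)).toLeft = ∅ := by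
  obtain ⟨j, hj⟩ := h
  refine eq_empty_of_forall_notMem fun i hi => ?_
  simp only [mem_toLeft, mem_maximizers] at hi
  exact (hj i).not_ge (hi (.inr j))

theorem maximizers_subset_toLeft_maximizers_sumElim {u : ι → ℝ} {v : κ → ℝ}
    (h : ∃ i, ∀ j, v j ≤ u i) : maximizers u ⊆ (maximizers (Sum.elim u v)).toLeft := by
  obtain ⟨i₀, hi₀⟩ := h
  intro i hi
  rw [mem_maximizers] at hi
  simp only [mem_toLeft, mem_maximizers]
  rintro (k | k)
  · exact hi k
  · exact (hi₀ k).trans (hi i₀)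

theorem toRight_maximizers_sumElim (u : ι → ℝ) (v : κ → ℝ) :
    (maximizers (Sum.elim u v)).toRight = (maximizers (Sum.elim v u)).toLeft := by
  ext j
  simp only [mem_toRight, mem_toLeft, mem_maximizers, Sum.forall, Sum.elim_inl,
    Sum.elim_inr, and_comm]

theorem card_maximizers_sumElim_comm (u : ι → ℝ) (v : κ → ℝ) :
    #(maximizers (Sum.elim u v)) = #(maximizers (Sum.elim v u)) := by
  rw [← card_toLeft_add_card_toRight, ← card_toLeft_add_card_toRight (u := maximizers _),
    toRight_maximizers_sumElim, toRight_maximizers_sumElim, add_comm]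

theorem card_maximizers_le_card_maximizers_sumElim {u : ι → ℝ} {v : κ → ℝ}
    (h : ∃ i, ∀ j, v j ≤ u i) : #(maximizers u) ≤ #(maximizers (Sum.elim u v)) :=
  (card_le_card (maximizers_subset_toLeft_maximizers_sumElim h)).trans card_toLeft_le

theorem supp_smul {c : ℝ} (hc : 0 < c) (w : ι → ℝ) : supp (c • w) = supp w := by
  ext i
  simp [supp, mul_pos_iff_of_pos_left hc]

@[simp]
theorem supp_zero : supp (0 : ι → ℝ) = ∅ := by
  simp [supp]

theorem card_supp_sum (z : ι ⊕ κ → ℝ) :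
    #(supp z) = #(supp (z ∘ Sum.inl)) + #(supp (z ∘ Sum.inr)) := by
  rw [← card_toLeft_add_card_toRight (u := supp z)]
  congr 2 <;> ext <;> simp [supp]

theorem IsMixed.exists_pos {w : ι → ℝ} (hw : IsMixed w) : ∃ i, 0 < w i := by
  by_contra! h
  have : ∑ i, w i ≤ 0 := sum_nonpos fun i _ => h i
  linarith [hw.2]

theorem IsMixed.ne_zero {w : ι → ℝ} (hw : IsMixed w) : w ≠ 0 := by
  rintro rfl
  simpa using hw.2

theorem isMixed_sumElim_zero {x : ι → ℝ} (hx : IsMixed x) :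
    IsMixed (Sum.elim x (0 : κ → ℝ)) :=
  ⟨fun | .inl i => hx.1 i | .inr _ => le_rfl, by simp [Fintype.sum_sum_type, hx.2]⟩

theorem isMixed_zero_sumElim {y : κ → ℝ} (hy : IsMixed y) :
    IsMixed (Sum.elim (0 : ι → ℝ) y) :=
  ⟨fun | .inl _ => le_rfl | .inr j => hy.1 j, by simp [Fintype.sum_sum_type, hy.2]⟩

def BestrespCardLeSupp (M : Matrix ι κ ℝ) : Prop :=
  ∀ y, IsMixed y → #(maximizers (M *ᵥ y)) ≤ #(supp y)

theorem nondegenerate_iff_bestrespCardLeSupp (A B : Matrix ι κ ℝ) :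
    Nondegenerate A B ↔ BestrespCardLeSupp Bᵀ ∧ BestrespCardLeSupp A :=
  Iff.rfl

theorem BestrespCardLeSupp.of_nonneg {M : Matrix ι κ ℝ} (hM : BestrespCardLeSupp M)
    {w : κ → ℝ} (hw : 0 ≤ w) (hw0 : w ≠ 0) : #(maximizers (M *ᵥ w)) ≤ #(supp w) := by
  have hc : 0 < (∑ k, w k)⁻¹ := by
    obtain ⟨k, hk⟩ := Function.ne_iff.mp hw0
    exact inv_pos.mpr <| sum_pos' (fun k _ => hw k) ⟨k, mem_univ k, (hw k).lt_of_ne' hk⟩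
  have hmixed : IsMixed ((∑ k, w k)⁻¹ • w) :=
    ⟨fun k => mul_nonneg hc.le (hw k),
      by simp [← mul_sum, inv_mul_cancel₀ (inv_pos.mp hc).ne']⟩
  simpa only [mulVec_smul, maximizers_smul hc, supp_smul hc] using hM _ hmixed

def ExistsPosMulVec (M : Matrix ι κ ℝ) : Prop :=
  ∀ w : κ → ℝ, 0 ≤ w → w ≠ 0 → ∃ i, 0 < (M *ᵥ w) i

theorem existsPosMulVec_of_isBounded {M : Matrix ι κ ℝ}
    (hb : Bornology.IsBounded {w : κ → ℝ | 0 ≤ w ∧ M *ᵥ w ≤ 1}) :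
    ExistsPosMulVec M := by
  intro w hw hw0
  by_contra! hneg
  obtain ⟨R, hR⟩ := isBounded_iff_forall_norm_le.mp hb
  have hray : ∀ t : ℝ, 0 ≤ t → ‖t • w‖ ≤ R := fun t ht =>
    hR _ ⟨smul_nonneg ht hw, fun i => by
      simpa [mulVec_smul] using (mul_nonpos_of_nonneg_of_nonpos ht (hneg i)).trans zero_le_one⟩
  have hw_pos : 0 < ‖w‖ := norm_pos_iff.mpr hw0
  have h := hray ((|R| + 1) / ‖w‖) (by positivity)
  rw [norm_smul, Real.norm_of_nonneg (by positivity), div_mul_cancel₀ _ hw_pos.ne'] at h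
  linarith [le_abs_self R]

variable {M : Matrix ι κ ℝ} {N : Matrix κ ι ℝ}

theorem fromBlocks_zero_mulVec (z : ι ⊕ κ → ℝ) :
    fromBlocks 0 M N 0 *ᵥ z = Sum.elim (M *ᵥ (z ∘ Sum.inr)) (N *ᵥ (z ∘ Sum.inl)) := by
  simp [fromBlocks_mulVec]

theorem card_toLeft_maximizers_sumElim_le (hM : BestrespCardLeSupp M) (hN : ExistsPosMulVec N)
    {x : ι → ℝ} {y : κ → ℝ} (hx : 0 ≤ x) (hy : 0 ≤ y) (hxy : x ≠ 0 ∨ y ≠ 0) :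
    #(maximizers (Sum.elim (M *ᵥ y) (N *ᵥ x))).toLeft ≤ #(supp y) := by
  by_cases hy0 : y = 0
  · obtain ⟨j, hj⟩ := hN x hx (hxy.resolve_right (not_not.mpr hy0))
    rw [toLeft_maximizers_sumElim_eq_empty ⟨j, fun i => by simpa [hy0] using hj⟩, card_empty]
    exact Nat.zero_le _
  · exact (card_le_card (toLeft_maximizers_sumElim_subset _ _)).trans (hM.of_nonneg hy hy0)

theorem bestrespCardLeSupp_fromBlocks (hM : BestrespCardLeSupp M) (hN : BestrespCardLeSupp N)
    (hM' : ExistsPosMulVec M) (hN' : ExistsPosMulVec N) :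
    BestrespCardLeSupp (fromBlocks 0 M N 0) := by
  intro z hz
  have hl : 0 ≤ z ∘ Sum.inl := fun i => hz.1 _
  have hr : 0 ≤ z ∘ Sum.inr := fun j => hz.1 _
  have hne : z ∘ Sum.inl ≠ 0 ∨ z ∘ Sum.inr ≠ 0 := by
    obtain ⟨i | j, hpos⟩ := IsMixed.exists_pos hz
    · exact .inl (Function.ne_iff.mpr ⟨i, hpos.ne'⟩)
    · exact .inr (Function.ne_iff.mpr ⟨j, hpos.ne'⟩)
  rw [fromBlocks_zero_mulVec, ← card_toLeft_add_card_toRight, toRight_maximizers_sumElim,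
    card_supp_sum, add_comm (#(supp _))]
  exact add_le_add (card_toLeft_maximizers_sumElim_le hM hN' hl hr hne)
    (card_toLeft_maximizers_sumElim_le hN hM' hr hl hne.symm)

theorem BestrespCardLeSupp.of_fromBlocks_left (h : BestrespCardLeSupp (fromBlocks 0 M N 0))
    (hM : ExistsPosMulVec M) : BestrespCardLeSupp M := by
  intro y hy
  obtain ⟨i, hi⟩ := hM y hy.1 (IsMixed.ne_zero hy)
  calc #(maximizers (M *ᵥ y)) ≤ #(maximizers (Sum.elim (M *ᵥ y) (N *ᵥ 0))) :=
        card_maximizers_le_card_maximizers_sumElim ⟨i, fun j => by simpa using hi.le⟩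
    _ = #(maximizers (fromBlocks 0 M N 0 *ᵥ Sum.elim 0 y)) := by
        rw [fromBlocks_zero_mulVec]; rfl
    _ ≤ #(supp (Sum.elim (0 : ι → ℝ) y)) := h _ (isMixed_zero_sumElim hy)
    _ = #(supp y) := by simp [card_supp_sum]

theorem BestrespCardLeSupp.of_fromBlocks_right (h : BestrespCardLeSupp (fromBlocks 0 M N 0))
    (hN : ExistsPosMulVec N) : BestrespCardLeSupp N := by
  intro x hx
  obtain ⟨j, hj⟩ := hN x hx.1 (IsMixed.ne_zero hx)
  calc #(maximizers (N *ᵥ x)) ≤ #(maximizers (Sum.elim (N *ᵥ x) (M *ᵥ 0))) :=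
        card_maximizers_le_card_maximizers_sumElim ⟨j, fun i => by simpa using hj.le⟩
    _ = #(maximizers (fromBlocks 0 M N 0 *ᵥ Sum.elim x 0)) := by
        rw [card_maximizers_sumElim_comm, fromBlocks_zero_mulVec]; rfl
    _ ≤ #(supp (Sum.elim x (0 : κ → ℝ))) := h _ (isMixed_sumElim_zero hx)
    _ = #(supp x) := by simp [card_supp_sum]

theorem bestrespCardLeSupp_fromBlocks_iff (hM : ExistsPosMulVec M) (hN : ExistsPosMulVec N) :
    BestrespCardLeSupp (fromBlocks 0 M N 0) ↔ BestrespCardLeSupp M ∧ BestrespCardLeSupp N :=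
  ⟨fun h => ⟨h.of_fromBlocks_left hM, h.of_fromBlocks_right hN⟩,
    fun h => bestrespCardLeSupp_fromBlocks h.1 h.2 hM hN⟩

end

/-- Let `P` and `Q` be bounded and let `C` be the `(m+n) × (m+n)` block matrix
`C = [[0, A], [Bᵀ, 0]]`.  Then `(A, B)` is nondegenerate iff the symmetric game
`(C, Cᵀ)` is nondegenerate. -/
theorem nondegenerate_iff_symmetrized_nondegenerate {m n : ℕ}
    (A B : Matrix (Fin m) (Fin n) ℝ)
    (hP : Bornology.IsBounded (Pset B)) (hQ : Bornology.IsBounded (Qset A)) :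
    Nondegenerate A B ↔
      Nondegenerate (Matrix.fromBlocks 0 A Bᵀ 0) (Matrix.fromBlocks 0 A Bᵀ 0)ᵀ := by
  have hA : ExistsPosMulVec A := existsPosMulVec_of_isBounded <|
    hQ.subset fun _ hw => ⟨hw.2, hw.1⟩
  have hB : ExistsPosMulVec Bᵀ := existsPosMulVec_of_isBounded hP
  rw [nondegenerate_iff_bestrespCardLeSupp, nondegenerate_iff_bestrespCardLeSupp,
    transpose_transpose, and_self, bestrespCardLeSupp_fromBlocks_iff hA hB, and_comm]
end
end

section
/- Let (A,B) be an m×n bimatrix game such that P and Q are bounded. Then (A,B) is nondegenerate if and only if for every x̂ ∈ X and every ŷ ∈ Y the following holds: if I is the set of labels of x̂ (namely the i ∈ {1,…,m} with x̂_i = 0 together with the m+j for j ∈ bestresp(x̂)) and J is the set of labels of ŷ (namely the m+j with ŷ_j = 0 together with the i ∈ bestresp(ŷ)), then the affine dimension of P(I) is m − |I| and the affine dimension of Q(J) is n − |J|. -/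
/-!
A point `z` of `P` has as labels the tight ones among the `m + n` constraints `x ≥ 0`,
`Bᵀx ≤ 𝟙`. Rescaling a mixed strategy `x̂` by its best payoff gives such a point with exactly the
labels `I` of `x̂`, and conversely every point of `P` with a tight payoff constraint normalises to a
mixed strategy with the same labels; nondegeneracy says that these points have at most `m` labels.

As `z` satisfies its other constraints strictly, `P(I)` spans the affine subspace cut out by the
constraints in `I`, of dimension at least `m - |I|`. Walking repeatedly inside it until a
new constraint becomes tight (`P` is bounded) ends at a point with labels `J ⊇ I` whose tight
constraints leave no free direction; each label of `J \ I` lowers the dimension by at most one, so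
`dim P(I) ≤ |J| - |I| ≤ m - |I|` under nondegeneracy. Conversely `dim P(I) ≥ 0` forces
`|I| ≤ m`, i.e. `|bestresp x̂| ≤ |supp x̂|`. The statement for `Q` is the one for `P` with `Aᵀ`.
-/

open Matrix
open scoped Classical

noncomputable section

/-- A point `x ∈ P` has label `i` (encoded `Sum.inl i`) if `x i = 0`, and label
`m + j` (encoded `Sum.inr j`) if `(Bᵀx)_j = 1`. -/
def hasLabelP {m n : ℕ} (B : Matrix (Fin m) (Fin n) ℝ) (x : Fin m → ℝ) :
    Fin m ⊕ Fin n → Prop :=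
  Sum.elim (fun i => x i = 0) (fun j => (Bᵀ *ᵥ x) j = 1)

/-- A point `y ∈ Q` has label `i` (encoded `Sum.inl i`) if `(Ay)_i = 1`, and label
`m + j` (encoded `Sum.inr j`) if `y j = 0`. -/
def hasLabelQ {m n : ℕ} (A : Matrix (Fin m) (Fin n) ℝ) (y : Fin n → ℝ) :
    Fin m ⊕ Fin n → Prop :=
  Sum.elim (fun i => (A *ᵥ y) i = 1) (fun j => y j = 0)

/-- `P(I)`: the set of points of `P` having (at least) all the labels in `I`. -/
def PI {m n : ℕ} (B : Matrix (Fin m) (Fin n) ℝ) (I : Finset (Fin m ⊕ Fin n)) :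
    Set (Fin m → ℝ) :=
  {x ∈ Pset B | ∀ l ∈ I, hasLabelP B x l}

/-- `Q(J)`: the set of points of `Q` having (at least) all the labels in `J`. -/
def QJ {m n : ℕ} (A : Matrix (Fin m) (Fin n) ℝ) (J : Finset (Fin m ⊕ Fin n)) :
    Set (Fin n → ℝ) :=
  {y ∈ Qset A | ∀ l ∈ J, hasLabelQ A y l}

/-- The labels of a mixed strategy `x̂ ∈ X`: the `i` with `x̂ i = 0` together with the
labels `m + j` for the pure best responses `j` to `x̂`. -/
def labelsX {m n : ℕ} (B : Matrix (Fin m) (Fin n) ℝ) (x : Fin m → ℝ) :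
    Finset (Fin m ⊕ Fin n) :=
  Finset.univ.filter
    (Sum.elim (fun i => x i = 0) (fun j => ∀ k, (Bᵀ *ᵥ x) k ≤ (Bᵀ *ᵥ x) j))

/-- The labels of a mixed strategy `ŷ ∈ Y`: the pure best responses `i` to `ŷ`
together with the labels `m + j` for the `j` with `ŷ j = 0`. -/
def labelsY {m n : ℕ} (A : Matrix (Fin m) (Fin n) ℝ) (y : Fin n → ℝ) :
    Finset (Fin m ⊕ Fin n) :=
  Finset.univ.filter
    (Sum.elim (fun i => ∀ k, (A *ᵥ y) k ≤ (A *ᵥ y) i) (fun j => y j = 0))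

/-- Affine dimension of a subset of `ℝ^ι`, with the empty set having dimension `-1`. -/
def affDim {ι : Type*} [Fintype ι] (s : Set (ι → ℝ)) : ℤ :=
  if s = ∅ then -1 else Module.finrank ℝ (affineSpan ℝ s).direction

open Finset Module Filter Topology

theorem eq_zero_of_isBounded_of_forall_add_smul_mem {E : Type*} [NormedAddCommGroup E]
    [NormedSpace ℝ E] {s : Set E} (hs : Bornology.IsBounded s) {q d : E}
    (hray : ∀ t : ℝ, 0 ≤ t → q + t • d ∈ s) : d = 0 := by
  obtain ⟨R, hR⟩ := isBounded_iff_forall_norm_le.mp hs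
  by_contra hd
  have hdpos : 0 < ‖d‖ := norm_pos_iff.mpr hd
  set t := (|R| + ‖q‖ + 1) / ‖d‖
  have htd : ‖t • d‖ = |R| + ‖q‖ + 1 := by
    rw [norm_smul, Real.norm_of_nonneg (by positivity), div_mul_cancel₀ _ hdpos.ne']
  have hle := hR _ (hray t (by positivity))
  have htri := norm_sub_le (q + t • d) q
  rw [add_sub_cancel_left] at htri
  linarith [le_abs_self R]

theorem affineSpan_eq_of_mem_nhdsWithin {E : Type*} [NormedAddCommGroup E] [NormedSpace ℝ E]
    {s : Set E} {L : AffineSubspace ℝ E} {z : E} (hsL : s ⊆ L) (hz : z ∈ L)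
    (hs : s ∈ 𝓝[L] z) : affineSpan ℝ s = L := by
  refine le_antisymm (affineSpan_le.mpr hsL) fun p hp => ?_
  have hγ : Tendsto (AffineMap.lineMap z p) (𝓝[≠] (0 : ℝ)) (𝓝[L] z) := by
    refine tendsto_nhdsWithin_iff.mpr ⟨?_, .of_forall fun t => AffineMap.lineMap_mem t hz hp⟩
    have := (AffineMap.lineMap_continuous : Continuous (AffineMap.lineMap z p : ℝ → E)).tendsto 0
    rw [AffineMap.lineMap_apply_zero] at this
    exact this.mono_left nhdsWithin_le_nhds
  obtain ⟨t, hts, ht0⟩ := ((hγ.eventually_mem hs).and eventually_mem_nhdsWithin).exists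
  have hzs : z ∈ affineSpan ℝ s := subset_affineSpan ℝ s (mem_of_mem_nhdsWithin hz hs)
  have hp : AffineMap.lineMap z (AffineMap.lineMap z p t) t⁻¹ = p := by
    rw [AffineMap.lineMap_lineMap_right, inv_mul_cancel₀ ht0, AffineMap.lineMap_apply_one]
  exact hp ▸ AffineMap.lineMap_mem t⁻¹ hzs (subset_affineSpan ℝ s hts)

section Polyhedron

variable {V α : Type*} [NormedAddCommGroup V] [NormedSpace ℝ V] (f : α → V →ᵃ[ℝ] ℝ)

def polyhedron : Set V := {x | ∀ l, 0 ≤ f l x}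

def face (I : Finset α) : Set V := {x ∈ polyhedron f | ∀ l ∈ I, f l x = 0}

def tightDirection (I : Finset α) : Submodule ℝ V :=
  LinearMap.ker (LinearMap.pi fun l : I => (f l).linear)

variable {f}

theorem mem_tightDirection {I : Finset α} {d : V} :
    d ∈ tightDirection f I ↔ ∀ l ∈ I, (f l).linear d = 0 := by
  simp [tightDirection, funext_iff]

theorem finrank_le_finrank_tightDirection_add_card [FiniteDimensional ℝ V] (I : Finset α) :
    finrank ℝ V ≤ finrank ℝ (tightDirection f I) + I.card := by
  have hrange := (LinearMap.range (LinearMap.pi fun l : I => (f l).linear)).finrank_le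
  rw [finrank_fintype_fun_eq_card, Fintype.card_coe] at hrange
  have := LinearMap.finrank_range_add_finrank_ker (LinearMap.pi fun l : I => (f l).linear)
  rw [tightDirection]
  omega

theorem tightDirection_eq_inf_sdiff {I J : Finset α} (hIJ : I ⊆ J) :
    tightDirection f J = tightDirection f I ⊓ tightDirection f (J \ I) := by
  ext d
  simp only [Submodule.mem_inf, mem_tightDirection, Finset.mem_sdiff]
  exact ⟨fun h => ⟨fun l hl => h l (hIJ hl), fun l hl => h l hl.1⟩,
    fun ⟨hI, hJI⟩ l hl => if h : l ∈ I then hI l h else hJI l ⟨hl, h⟩⟩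

theorem finrank_tightDirection_le [FiniteDimensional ℝ V] {I J : Finset α} (hIJ : I ⊆ J) :
    finrank ℝ (tightDirection f I) ≤ finrank ℝ (tightDirection f J) + (J \ I).card := by
  have hsup := Submodule.finrank_sup_add_finrank_inf_eq (tightDirection f I)
    (tightDirection f (J \ I))
  have := (tightDirection f I ⊔ tightDirection f (J \ I)).finrank_le
  have := finrank_le_finrank_tightDirection_add_card (f := f) (J \ I)
  rw [tightDirection_eq_inf_sdiff hIJ]
  omega

theorem isClosed_polyhedron [FiniteDimensional ℝ V] : IsClosed (polyhedron f) := by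
  simp only [polyhedron, Set.ofPred_forall]
  exact isClosed_iInter fun l => isClosed_le continuous_const (f l).continuous_of_finiteDimensional

theorem mem_mk'_tightDirection_iff {I : Finset α} {q x : V} (hq : ∀ l ∈ I, f l q = 0) :
    x ∈ AffineSubspace.mk' q (tightDirection f I) ↔ ∀ l ∈ I, f l x = 0 := by
  rw [AffineSubspace.mem_mk', mem_tightDirection]
  refine forall₂_congr fun l hl => ?_
  rw [AffineMap.linearMap_vsub, hq l hl, vsub_eq_sub, sub_zero]

variable (f) [Fintype α]

/-- For `f = slack B` these are the labels of a point of `P`. -/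
def tightSet (x : V) : Finset α := univ.filter fun l => f l x = 0

variable {f}

@[simp]
theorem mem_tightSet {x : V} {l : α} : l ∈ tightSet f x ↔ f l x = 0 := by
  simp [tightSet]

theorem face_tightSet_mem_nhdsWithin [FiniteDimensional ℝ V] {q : V} (hq : q ∈ polyhedron f) :
    face f (tightSet f q) ∈ 𝓝[AffineSubspace.mk' q (tightDirection f (tightSet f q))] q := by
  have hopen : IsOpen {x | ∀ l ∉ tightSet f q, 0 < f l x} := by
    simp only [Set.ofPred_forall]
    exact isOpen_iInter_of_finite fun l => isOpen_iInter_of_finite fun _ =>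
      isOpen_lt continuous_const (f l).continuous_of_finiteDimensional
  refine mem_nhdsWithin.mpr ⟨_, hopen, fun l hl => (hq l).lt_of_ne' (by simpa using hl), ?_⟩
  rintro x ⟨hxU, hxL⟩
  have hxI := (mem_mk'_tightDirection_iff fun _ => mem_tightSet.mp).mp hxL
  exact ⟨fun l => if hl : l ∈ tightSet f q then (hxI l hl).ge else (hxU l hl).le, hxI⟩

theorem affineSpan_face_tightSet [FiniteDimensional ℝ V] {q : V} (hq : q ∈ polyhedron f) :
    affineSpan ℝ (face f (tightSet f q)) =
      AffineSubspace.mk' q (tightDirection f (tightSet f q)) :=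
  affineSpan_eq_of_mem_nhdsWithin
    (fun _ hx => (mem_mk'_tightDirection_iff fun _ => mem_tightSet.mp).mpr hx.2)
    (AffineSubspace.self_mem_mk' _ _) (face_tightSet_mem_nhdsWithin hq)

theorem exists_tightSet_ssubset [FiniteDimensional ℝ V]
    (hbdd : Bornology.IsBounded (polyhedron f)) {q d : V} (hq : q ∈ polyhedron f)
    (hd : d ∈ tightDirection f (tightSet f q)) (hd0 : d ≠ 0) :
    ∃ q' ∈ polyhedron f, tightSet f q ⊂ tightSet f q' := by
  set I := tightSet f q
  have hray : ∀ t : ℝ, q + t • d ∈ AffineSubspace.mk' q (tightDirection f I) := fun t => by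
    rw [AffineSubspace.mem_mk', vsub_eq_sub, add_sub_cancel_left]
    exact Submodule.smul_mem _ t hd
  obtain ⟨t₁, ht₁0, ht₁⟩ : ∃ t : ℝ, 0 ≤ t ∧ q + t • d ∉ polyhedron f := by
    by_contra! h
    exact hd0 (eq_zero_of_isBounded_of_forall_add_smul_mem hbdd h)
  have hcont : Continuous fun t : ℝ => q + t • d := by fun_prop
  set T : Set ℝ := Set.Icc 0 t₁ ∩ (fun t => q + t • d) ⁻¹' polyhedron f
  have hT0 : (0 : ℝ) ∈ T := ⟨⟨le_rfl, ht₁0⟩, by simpa using hq⟩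
  obtain ⟨t, ⟨⟨ht0, htt₁⟩, htP⟩, htmax⟩ :=
    (isCompact_Icc.inter_right (isClosed_polyhedron.preimage hcont)).exists_isGreatest ⟨0, hT0⟩
  have htt₁ : t < t₁ := htt₁.lt_of_ne (by rintro rfl; exact ht₁ htP)
  have hIq' : I ⊆ tightSet f (q + t • d) := fun l hl =>
    mem_tightSet.mpr ((mem_mk'_tightDirection_iff fun _ => mem_tightSet.mp).mp (hray t) l hl)
  refine ⟨q + t • d, htP, hIq'.ssubset_of_ne fun hI => ?_⟩
  -- otherwise `q + t • d` is relatively interior to its face, so the ray stays in it beyond `t`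
  have hnhds := face_tightSet_mem_nhdsWithin htP
  have hL : AffineSubspace.mk' (q + t • d) (tightDirection f I) =
      AffineSubspace.mk' q (tightDirection f I) := by
    simpa using AffineSubspace.mk'_eq (hray t)
  rw [← hI, hL] at hnhds
  have hγ : Tendsto (fun s : ℝ => q + (t + s) • d) (𝓝[>] 0)
      (𝓝[AffineSubspace.mk' q (tightDirection f I)] (q + t • d)) := by
    refine tendsto_nhdsWithin_iff.mpr ⟨?_, .of_forall fun s => hray (t + s)⟩
    exact ((by fun_prop : Continuous fun s : ℝ => q + (t + s) • d).tendsto' 0 _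
      (by simp)).mono_left nhdsWithin_le_nhds
  obtain ⟨s, hsP, hs0, hst⟩ :=
    ((hγ.eventually_mem hnhds).and (Ioo_mem_nhdsGT (sub_pos.mpr htt₁))).exists
  have := htmax ⟨⟨by linarith, by linarith⟩, hsP.1⟩
  linarith

theorem exists_tightDirection_eq_bot [FiniteDimensional ℝ V]
    (hbdd : Bornology.IsBounded (polyhedron f)) {q : V} (hq : q ∈ polyhedron f) :
    ∃ q' ∈ polyhedron f, tightSet f q ⊆ tightSet f q' ∧ tightDirection f (tightSet f q') = ⊥ := by
  obtain ⟨J, hJ, hmax⟩ := exists_max_image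
    (univ.filter fun J => ∃ p ∈ polyhedron f, tightSet f q ⊆ J ∧ tightSet f p = J) card
    ⟨_, mem_filter.mpr ⟨mem_univ _, q, hq, subset_rfl, rfl⟩⟩
  obtain ⟨p, hp, hqJ, rfl⟩ := (mem_filter.mp hJ).2
  refine ⟨p, hp, hqJ, (Submodule.eq_bot_iff _).mpr fun d hd => by_contra fun hd0 => ?_⟩
  obtain ⟨p', hp', hpp'⟩ := exists_tightSet_ssubset hbdd hp hd hd0
  exact (card_lt_card hpp').not_ge
    (hmax _ (mem_filter.mpr ⟨mem_univ _, p', hp', hqJ.trans hpp'.subset, rfl⟩))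

theorem finrank_tightDirection_add_card_eq [FiniteDimensional ℝ V]
    (hbdd : Bornology.IsBounded (polyhedron f)) {q : V} (hq : q ∈ polyhedron f)
    (hcard : ∀ p ∈ polyhedron f, tightSet f q ⊆ tightSet f p →
      (tightSet f p).card ≤ finrank ℝ V) :
    finrank ℝ (tightDirection f (tightSet f q)) + (tightSet f q).card = finrank ℝ V := by
  obtain ⟨p, hp, hqp, hbot⟩ := exists_tightDirection_eq_bot hbdd hq
  have hle := finrank_tightDirection_le (f := f) hqp
  rw [hbot, finrank_bot, zero_add, card_sdiff_of_subset hqp] at hle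
  have hge := finrank_le_finrank_tightDirection_add_card (f := f) (tightSet f q)
  have := hcard p hp hqp
  have := card_le_card hqp
  omega

end Polyhedron

section Slack

variable {ι κ : Type*} [Fintype ι] (B : Matrix ι κ ℝ)

def slack : ι ⊕ κ → (ι → ℝ) →ᵃ[ℝ] ℝ :=
  Sum.elim (fun i => (LinearMap.proj i).toAffineMap)
    (fun j => AffineMap.const ℝ _ 1 - ((LinearMap.proj j).comp Bᵀ.mulVecLin).toAffineMap)

@[simp]
theorem slack_inl (x : ι → ℝ) (i : ι) : slack B (.inl i) x = x i := rfl

@[simp]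
theorem slack_inr (x : ι → ℝ) (j : κ) : slack B (.inr j) x = 1 - (Bᵀ *ᵥ x) j := rfl

end Slack

section Game

variable {m n : ℕ}

theorem Pset_eq_polyhedron (B : Matrix (Fin m) (Fin n) ℝ) : Pset B = polyhedron (slack B) := by
  ext x
  simp [Pset, polyhedron, Sum.forall]

theorem PI_eq_face (B : Matrix (Fin m) (Fin n) ℝ) (I : Finset (Fin m ⊕ Fin n)) :
    PI B I = face (slack B) I := by
  ext x
  refine and_congr (by rw [Pset_eq_polyhedron]) (forall₂_congr fun l _ => ?_)
  rcases l with i | j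
  · rfl
  · exact (sub_eq_zero.trans eq_comm).symm

theorem labelsX_smul (B : Matrix (Fin m) (Fin n) ℝ) (x : Fin m → ℝ) {c : ℝ} (hc : 0 < c) :
    labelsX B (c • x) = labelsX B x := by
  ext (i | j) <;> simp [labelsX, hc.ne', Matrix.mulVec_smul, mul_le_mul_iff_right₀ hc]

theorem labelsX_eq_tightSet {B : Matrix (Fin m) (Fin n) ℝ} {z : Fin m → ℝ} (hz : z ∈ Pset B)
    {j : Fin n} (hj : .inr j ∈ tightSet (slack B) z) : labelsX B z = tightSet (slack B) z := by
  have hj1 : (Bᵀ *ᵥ z) j = 1 := (sub_eq_zero.mp (mem_tightSet.mp hj)).symm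
  ext (i | k)
  · simp [labelsX]
  · simp only [labelsX, mem_filter, mem_univ, true_and, Sum.elim_inr, mem_tightSet, slack_inr,
      sub_eq_zero]
    exact ⟨fun h => le_antisymm (hj1.ge.trans (h j)) (hz.2 k), fun h k' => (hz.2 k').trans h.le⟩

theorem card_labelsX_add_card_supp (B : Matrix (Fin m) (Fin n) ℝ) {x : Fin m → ℝ}
    (hx : ∀ i, 0 ≤ x i) : (labelsX B x).card + (supp x).card = m + (bestresp2 B x).card := by
  have hleft : (labelsX B x).toLeft = (supp x)ᶜ := by
    ext i
    simp [labelsX, supp, (hx i).ge_iff_eq']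
  have hright : (labelsX B x).toRight = bestresp2 B x := by
    ext j
    simp [labelsX, bestresp2]
  rw [← card_toLeft_add_card_toRight, hleft, hright, card_compl, Fintype.card_fin]
  have := card_le_univ (supp x)
  rw [Fintype.card_fin] at this
  omega

theorem card_bestresp2_le_card_supp_iff (B : Matrix (Fin m) (Fin n) ℝ) {x : Fin m → ℝ}
    (hx : ∀ i, 0 ≤ x i) : (bestresp2 B x).card ≤ (supp x).card ↔ (labelsX B x).card ≤ m := by
  have := card_labelsX_add_card_supp B hx
  omega

theorem exists_pos_payoff {B : Matrix (Fin m) (Fin n) ℝ} (hP : Bornology.IsBounded (Pset B))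
    {x : Fin m → ℝ} (hx : IsMixed x) : ∃ j, 0 < (Bᵀ *ᵥ x) j := by
  by_contra! h
  have hx0 : x = 0 := by
    refine eq_zero_of_isBounded_of_forall_add_smul_mem hP (q := 0) fun t ht => ?_
    refine ⟨fun i => by simpa using mul_nonneg ht (hx.1 i), fun j => ?_⟩
    simpa [Matrix.mulVec_smul] using (mul_nonpos_of_nonneg_of_nonpos ht (h j)).trans zero_le_one
  simpa [hx0] using hx.2

theorem exists_mem_Pset_labelsX_eq {B : Matrix (Fin m) (Fin n) ℝ}
    (hP : Bornology.IsBounded (Pset B)) {x : Fin m → ℝ} (hx : IsMixed x) :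
    ∃ z ∈ Pset B, (∃ j, .inr j ∈ tightSet (slack B) z) ∧ labelsX B x = tightSet (slack B) z := by
  obtain ⟨j, hj⟩ := exists_pos_payoff hP hx
  obtain ⟨j₀, -, hmax⟩ := exists_max_image univ (Bᵀ *ᵥ x) ⟨j, mem_univ j⟩
  set v := (Bᵀ *ᵥ x) j₀ with hv_def
  have hv : 0 < v := hj.trans_le (hmax j (mem_univ j))
  have hz : v⁻¹ • x ∈ Pset B := by
    refine ⟨fun i => mul_nonneg (inv_nonneg.mpr hv.le) (hx.1 i), fun k => ?_⟩
    simpa [Matrix.mulVec_smul, inv_mul_le_iff₀ hv] using hmax k (mem_univ k)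
  have hj₀ : .inr j₀ ∈ tightSet (slack B) (v⁻¹ • x) := by
    simp [Matrix.mulVec_smul, ← hv_def, inv_mul_cancel₀ hv.ne']
  exact ⟨_, hz, ⟨j₀, hj₀⟩, by rw [← labelsX_eq_tightSet hz hj₀, labelsX_smul B x (inv_pos.mpr hv)]⟩

theorem exists_isMixed_labelsX_eq {B : Matrix (Fin m) (Fin n) ℝ} {z : Fin m → ℝ}
    (hz : z ∈ Pset B) {j : Fin n} (hj : .inr j ∈ tightSet (slack B) z) :
    ∃ x, IsMixed x ∧ labelsX B x = tightSet (slack B) z := by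
  have hσ : 0 < ∑ i, z i := by
    refine (sum_nonneg fun i _ => hz.1 i).lt_of_ne fun h => ?_
    have hz0 : z = 0 := funext fun i =>
      (sum_eq_zero_iff_of_nonneg fun i _ => hz.1 i).mp h.symm i (mem_univ i)
    simp [hz0] at hj
  refine ⟨(∑ i, z i)⁻¹ • z, ⟨fun i => mul_nonneg (inv_nonneg.mpr hσ.le) (hz.1 i), ?_⟩, ?_⟩
  · simp [← mul_sum, inv_mul_cancel₀ hσ.ne']
  · rw [labelsX_smul B z (inv_pos.mpr hσ), labelsX_eq_tightSet hz hj]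

theorem affDim_PI_tightSet {B : Matrix (Fin m) (Fin n) ℝ} {z : Fin m → ℝ} (hz : z ∈ Pset B) :
    affDim (PI B (tightSet (slack B) z)) =
      finrank ℝ (tightDirection (slack B) (tightSet (slack B) z)) := by
  rw [Pset_eq_polyhedron] at hz
  have hne : PI B (tightSet (slack B) z) ≠ ∅ :=
    Set.nonempty_iff_ne_empty.mp ⟨z, (PI_eq_face B _).symm ▸ ⟨hz, fun _ => mem_tightSet.mp⟩⟩
  rw [affDim, if_neg hne, PI_eq_face, affineSpan_face_tightSet hz, AffineSubspace.direction_mk']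

theorem forall_card_bestresp2_le_iff_affDim {B : Matrix (Fin m) (Fin n) ℝ}
    (hP : Bornology.IsBounded (Pset B)) :
    (∀ x, IsMixed x → (bestresp2 B x).card ≤ (supp x).card) ↔
      ∀ x, IsMixed x → affDim (PI B (labelsX B x)) = (m : ℤ) - (labelsX B x).card := by
  constructor
  · intro hnd x hx
    obtain ⟨z, hz, ⟨j, hj⟩, hxz⟩ := exists_mem_Pset_labelsX_eq hP hx
    have hcard : ∀ p ∈ polyhedron (slack B), tightSet (slack B) z ⊆ tightSet (slack B) p →
        (tightSet (slack B) p).card ≤ finrank ℝ (Fin m → ℝ) := by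
      intro p hp hzp
      rw [← Pset_eq_polyhedron] at hp
      obtain ⟨x', hx', hx'p⟩ := exists_isMixed_labelsX_eq hp (hzp hj)
      rw [finrank_fin_fun, ← hx'p]
      exact (card_bestresp2_le_card_supp_iff B hx'.1).mp (hnd x' hx')
    have hdim := finrank_tightDirection_add_card_eq (Pset_eq_polyhedron B ▸ hP)
      (Pset_eq_polyhedron B ▸ hz) hcard
    rw [finrank_fin_fun] at hdim
    rw [hxz, affDim_PI_tightSet hz]
    omega
  · intro hdim x hx
    obtain ⟨z, hz, -, hxz⟩ := exists_mem_Pset_labelsX_eq hP hx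
    have hdimx := hdim x hx
    rw [hxz, affDim_PI_tightSet hz] at hdimx
    rw [card_bestresp2_le_card_supp_iff B hx.1, hxz]
    omega

end Game

section Transpose

variable {m n : ℕ}

theorem Qset_eq_Pset_transpose (A : Matrix (Fin m) (Fin n) ℝ) : Qset A = Pset Aᵀ := by
  ext y
  simp [Qset, Pset, and_comm]

theorem bestresp1_eq_bestresp2_transpose (A : Matrix (Fin m) (Fin n) ℝ) (y : Fin n → ℝ) :
    bestresp1 A y = bestresp2 Aᵀ y := by
  ext i
  simp [bestresp1, bestresp2]

theorem labelsY_eq_map_labelsX_transpose (A : Matrix (Fin m) (Fin n) ℝ) (y : Fin n → ℝ) :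
    labelsY A y = (labelsX Aᵀ y).map (Equiv.sumComm (Fin n) (Fin m)).toEmbedding := by
  ext (i | j) <;> simp [labelsY, labelsX]

theorem QJ_labelsY_eq_PI_labelsX_transpose (A : Matrix (Fin m) (Fin n) ℝ) (y : Fin n → ℝ) :
    QJ A (labelsY A y) = PI Aᵀ (labelsX Aᵀ y) := by
  ext q
  simp only [QJ, Qset, Set.mem_ofPred_eq, labelsY, mem_filter, mem_univ, true_and, hasLabelQ,
    Sum.forall, Sum.elim_inl, Sum.elim_inr, PI, Pset, transpose_transpose, labelsX, hasLabelP]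
  exact and_congr and_comm and_comm

end Transpose

/-- Let `P` and `Q` be bounded.  Then `(A,B)` is nondegenerate iff for every
`x̂ ∈ X` and `ŷ ∈ Y`, with label sets `I` of `x̂` and `J` of `ŷ`, the affine
dimension of `P(I)` is `m - |I|` and the affine dimension of `Q(J)` is `n - |J|`. -/
theorem nondegenerate_iff_dimensions {m n : ℕ} (A B : Matrix (Fin m) (Fin n) ℝ)
    (hP : Bornology.IsBounded (Pset B)) (hQ : Bornology.IsBounded (Qset A)) :
    Nondegenerate A B ↔
      ((∀ x : Fin m → ℝ, IsMixed x →
          affDim (PI B (labelsX B x)) = (m : ℤ) - (labelsX B x).card) ∧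
       (∀ y : Fin n → ℝ, IsMixed y →
          affDim (QJ A (labelsY A y)) = (n : ℤ) - (labelsY A y).card)) := by
  rw [Qset_eq_Pset_transpose] at hQ
  have hcard (y : Fin n → ℝ) : (labelsY A y).card = (labelsX Aᵀ y).card := by
    rw [labelsY_eq_map_labelsX_transpose, card_map]
  simp only [_root_.Nondegenerate, bestresp1_eq_bestresp2_transpose,
    QJ_labelsY_eq_PI_labelsX_transpose, hcard, forall_card_bestresp2_le_iff_affDim hP,
    forall_card_bestresp2_le_iff_affDim hQ]
end
end
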